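/- arXiv:1604.02187 — 3 statements merged into one kernel-verified Lean document; each statement's English description precedes it below -/
import Mathlib

section
/- Second-order Korn inequality: for any v ∈ [H₀²(Ω)]² on a bounded domain Ω ⊂ ℝ², one has 2‖∇ε(v)‖²_{L²(Ω)} ≥ ‖∇²v‖²_{L²(Ω)}, where ∇ε(v) is the third-order tensor with components ∂_{x_i} ε_{jk}(v) and ∇²v is the Hessian tensor of v. -/
/-!
Every partial derivative `w = ∂ᵢv` is again a compactly supported smooth field, and by the
symmetry of second derivatives `∂ᵢ∇v = ∇w` and `∂ᵢε(v) = ε(w)`. So it suffices to prove the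
first Korn inequality `‖∇w‖² ≤ 2‖ε(w)‖²` and sum over `i`. Pointwise
`2|ε(w)|² = |∇w|² + ∑ⱼₖ ∂ₖwⱼ ∂ⱼwₖ`, and integrating by parts twice turns the integral of the
last sum into `∫ (div w)² ≥ 0`.
-/

open MeasureTheory

noncomputable section

abbrev V2 := EuclideanSpace ℝ (Fin 2)

def e2 (j : Fin 2) : V2 := EuclideanSpace.single j 1

def pd (f : V2 → ℝ) (j : Fin 2) (x : V2) : ℝ := fderiv ℝ f x (e2 j)

/-- the Jacobian entry `(∇v)_{jk} = ∂v_j/∂x_k` -/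
def grad (v : V2 → V2) (x : V2) (j k : Fin 2) : ℝ := pd (fun y => v y j) k x

/-- the symmetric gradient `ε(v)_{jk}` -/
def epsF (v : V2 → V2) (j k : Fin 2) : V2 → ℝ :=
  fun x => (grad v x j k + grad v x k j) / 2

section Scalar

variable {f g : V2 → ℝ}

lemma continuous_pd (hf : ContDiff ℝ 1 f) (j : Fin 2) : Continuous (pd f j) :=
  (hf.continuous_fderiv one_ne_zero).clm_apply continuous_const

lemma contDiff_pd {n : WithTop ℕ∞} (hf : ContDiff ℝ (n + 1) f) (j : Fin 2) :
    ContDiff ℝ n (pd f j) :=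
  (hf.fderiv_right le_rfl).clm_apply contDiff_const

lemma HasCompactSupport.pd (hf : HasCompactSupport f) (j : Fin 2) :
    HasCompactSupport (pd f j) :=
  hf.fderiv_apply ℝ (e2 j)

lemma pd_eq_zero_of_notMem_tsupport {x : V2} (hx : x ∉ tsupport f) (j : Fin 2) :
    pd f j x = 0 := by
  rw [pd, image_eq_zero_of_notMem_tsupport fun h => hx (tsupport_fderiv_subset ℝ h),
    zero_apply]

lemma pd_pd_comm (hf : ContDiff ℝ 2 f) (i j : Fin 2) (x : V2) :
    pd (pd f j) i x = pd (pd f i) j x := by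
  have hdf : DifferentiableAt ℝ (fderiv ℝ f) x :=
    (hf.fderiv_right (m := 1) le_rfl).differentiable one_ne_zero x
  have hpd : ∀ u w : V2, fderiv ℝ (fun y => fderiv ℝ f y w) x u = fderiv ℝ (fderiv ℝ f) x u w :=
    fun u w => by simp [fderiv_clm_apply hdf (differentiableAt_const w)]
  change fderiv ℝ (fun y => fderiv ℝ f y (e2 j)) x (e2 i) =
    fderiv ℝ (fun y => fderiv ℝ f y (e2 i)) x (e2 j)
  rw [hpd, hpd]
  exact hf.contDiffAt.isSymmSndFDerivAt (by simp) _ _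

lemma integral_mul_pd_eq_neg (hf : ContDiff ℝ 1 f) (hg : ContDiff ℝ 1 g)
    (hfs : HasCompactSupport f) (j : Fin 2) :
    ∫ x, f x * pd g j x = - ∫ x, pd f j x * g x := by
  have hfc := hf.continuous
  have hgc := hg.continuous
  exact integral_mul_fderiv_eq_neg_fderiv_mul_of_integrable
    ((continuous_pd hf j).mul hgc |>.integrable_of_hasCompactSupport (hfs.pd j).mul_right)
    (hfc.mul (continuous_pd hg j) |>.integrable_of_hasCompactSupport hfs.mul_right)
    (hfc.mul hgc |>.integrable_of_hasCompactSupport hfs.mul_right)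
    (fun x _ => hf.differentiable one_ne_zero x) (fun x _ => hg.differentiable one_ne_zero x)

lemma integral_pd_mul_pd_comm (hf : ContDiff ℝ 1 f) (hg : ContDiff ℝ 2 g)
    (hfs : HasCompactSupport f) (j k : Fin 2) :
    ∫ x, pd f j x * pd g k x = ∫ x, pd f k x * pd g j x := by
  have hg' : ∀ i, ContDiff ℝ 1 (pd g i) := fun i => contDiff_pd hg i
  have hjk := integral_mul_pd_eq_neg hf (hg' k) hfs j
  have hkj := integral_mul_pd_eq_neg hf (hg' j) hfs k
  simp only [pd_pd_comm hg j k] at hjk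
  linarith

end Scalar

section VectorField

variable {v w : V2 → V2}

lemma contDiff_component {n : WithTop ℕ∞} (hv : ContDiff ℝ n v) (k : Fin 2) :
    ContDiff ℝ n (fun y => v y k) :=
  (EuclideanSpace.proj k : V2 →L[ℝ] ℝ).contDiff.comp hv

lemma HasCompactSupport.component (hv : HasCompactSupport v) (k : Fin 2) :
    HasCompactSupport (fun y => v y k) :=
  hv.comp_left (g := fun u : V2 => u k) rfl

lemma grad_eq_zero_of_notMem_tsupport {x : V2} (hx : x ∉ tsupport w) (j k : Fin 2) :
    grad w x j k = 0 :=
  pd_eq_zero_of_notMem_tsupport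
    (fun h => hx (tsupport_comp_subset (g := fun u : V2 => u j) rfl w h)) k

lemma continuous_grad (hw : ContDiff ℝ 1 w) : Continuous (grad w) :=
  continuous_pi fun j => continuous_pi fun k => continuous_pd (contDiff_component hw j) k

lemma integrable_comp_grad (hw : ContDiff ℝ 1 w) (hws : HasCompactSupport w)
    {F : (Fin 2 → Fin 2 → ℝ) → ℝ} (hF : Continuous F) (hF0 : F 0 = 0) :
    Integrable (fun x => F (grad w x)) := by
  refine (hF.comp (continuous_grad hw)).integrable_of_hasCompactSupport (hws.mono' fun x hx => ?_)
  by_contra hxw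
  have : grad w x = 0 := funext₂ (grad_eq_zero_of_notMem_tsupport hxw)
  exact hx (by simp [this, hF0])

def pdVec (v : V2 → V2) (i : Fin 2) : V2 → V2 := fun x => fderiv ℝ v x (e2 i)

lemma pdVec_apply {x : V2} (hv : DifferentiableAt ℝ v x) (i k : Fin 2) :
    pdVec v i x k = pd (fun y => v y k) i x := by
  have := ((EuclideanSpace.proj k : V2 →L[ℝ] ℝ).hasFDerivAt.comp x hv.hasFDerivAt).fderiv
  rw [pd]
  exact (congrArg (· (e2 i)) this).symm

lemma contDiff_pdVec {n : WithTop ℕ∞} (hv : ContDiff ℝ (n + 1) v) (i : Fin 2) :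
    ContDiff ℝ n (pdVec v i) :=
  (hv.fderiv_right le_rfl).clm_apply contDiff_const

lemma HasCompactSupport.pdVec (hv : HasCompactSupport v) (i : Fin 2) :
    HasCompactSupport (pdVec v i) :=
  hv.fderiv_apply ℝ (e2 i)

lemma tsupport_pdVec_subset (i : Fin 2) : tsupport (pdVec v i) ⊆ tsupport v :=
  (tsupport_comp_subset (g := fun L : V2 →L[ℝ] V2 => L (e2 i)) rfl _).trans
    (tsupport_fderiv_subset ℝ)

lemma grad_pdVec (hv : ContDiff ℝ 2 v) (i j k : Fin 2) (x : V2) :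
    grad (pdVec v i) x j k = pd (pd (fun y => v y j) i) k x := by
  have : (fun y => pdVec v i y j) = pd (fun y => v y j) i :=
    funext fun y => pdVec_apply (hv.differentiable two_ne_zero y) i j
  rw [grad, this]

lemma pd_grad_eq_grad_pdVec (hv : ContDiff ℝ 2 v) (i j k : Fin 2) (x : V2) :
    pd (fun y => grad v y j k) i x = grad (pdVec v i) x j k := by
  rw [grad_pdVec hv]
  exact pd_pd_comm (contDiff_component hv j) i k x

lemma pd_epsF_eq_epsF_pdVec (hv : ContDiff ℝ 2 v) (i j k : Fin 2) (x : V2) :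
    pd (epsF v j k) i x = epsF (pdVec v i) j k x := by
  have hd : ∀ j k, Differentiable ℝ (fun y => grad v y j k) := fun j k =>
    (contDiff_pd (contDiff_component hv j) k).differentiable one_ne_zero
  rw [epsF, ← pd_grad_eq_grad_pdVec hv, ← pd_grad_eq_grad_pdVec hv]
  unfold epsF pd
  simp only [div_eq_mul_inv]
  rw [fderiv_mul_const ((hd j k x).fun_add (hd k j x)), fderiv_fun_add (hd j k x) (hd k j x)]
  simp only [smul_apply, add_apply, smul_eq_mul]
  ring

end VectorField

section Korn

variable {w : V2 → V2}

lemma integral_sum_grad_mul_grad_swap_eq_integral_div_sq (hw : ContDiff ℝ 2 w)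
    (hws : HasCompactSupport w) :
    ∫ x, ∑ j, ∑ k, grad w x j k * grad w x k j = ∫ x, (∑ j, grad w x j j) ^ 2 := by
  have hw1 : ContDiff ℝ 1 w := hw.of_le one_le_two
  have hint : ∀ a b c d : Fin 2, Integrable (fun x => grad w x a b * grad w x c d) :=
    fun a b c d =>
      integrable_comp_grad hw1 hws (F := fun M => M a b * M c d) (by fun_prop) (by simp)
  have hsq : ∀ x, (∑ j, grad w x j j) ^ 2 = ∑ j, ∑ k, grad w x j j * grad w x k k := fun x => by
    simp only [Fin.sum_univ_two]; ring
  simp only [hsq]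
  rw [integral_finsetSum _ fun j _ => integrable_finsetSum _ fun k _ => hint j k k j,
    integral_finsetSum _ fun j _ => integrable_finsetSum _ fun k _ => hint j j k k]
  refine Finset.sum_congr rfl fun j _ => ?_
  rw [integral_finsetSum _ fun k _ => hint j k k j, integral_finsetSum _ fun k _ => hint j j k k]
  exact Finset.sum_congr rfl fun k _ => integral_pd_mul_pd_comm (contDiff_component hw1 j)
    (contDiff_component hw k) (hws.component j) k j

lemma two_mul_sum_sq_epsF (x : V2) :
    2 * ∑ j, ∑ k, epsF w j k x ^ 2 =
      ∑ j, ∑ k, grad w x k j ^ 2 + ∑ j, ∑ k, grad w x j k * grad w x k j := by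
  simp only [epsF, Fin.sum_univ_two]
  ring

theorem korn_first_inequality (hw : ContDiff ℝ 2 w) (hws : HasCompactSupport w) :
    ∫ x, ∑ j, ∑ k, grad w x k j ^ 2 ≤ 2 * ∫ x, ∑ j, ∑ k, epsF w j k x ^ 2 := by
  have hw1 : ContDiff ℝ 1 w := hw.of_le one_le_two
  rw [← integral_const_mul, integral_congr_ae (.of_forall two_mul_sum_sq_epsF),
    integral_add (integrable_comp_grad hw1 hws (F := fun M => ∑ j, ∑ k, M k j ^ 2)
      (by fun_prop) (by simp))
      (integrable_comp_grad hw1 hws (F := fun M => ∑ j, ∑ k, M j k * M k j)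
        (by fun_prop) (by simp)),
    integral_sum_grad_mul_grad_swap_eq_integral_div_sq hw hws]
  exact le_add_of_nonneg_right (integral_nonneg fun x => sq_nonneg _)

end Korn

/-- `v ∈ [H₀²(Ω)]²` is modelled by smooth fields compactly supported in `Ω`, which are dense
in `H₀²(Ω)`. -/
theorem stmt3_general (Ω : Set V2)
    (v : V2 → V2) (hv : ContDiff ℝ (⊤ : ℕ∞) v)
    (hsupp : HasCompactSupport v) (hin : tsupport v ⊆ Ω) :
    (∫ x in Ω, ∑ i, ∑ j, ∑ k, (pd (fun y => grad v y k j) i x) ^ 2) ≤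
      2 * ∫ x in Ω, ∑ i, ∑ j, ∑ k, (pd (epsF v j k) i x) ^ 2 := by
  have hv2 : ContDiff ℝ 2 v := hv.of_le (WithTop.coe_le_coe.mpr le_top)
  have hw : ∀ i, ContDiff ℝ 2 (pdVec v i) := fun i =>
    contDiff_pdVec (hv.of_le (WithTop.coe_le_coe.mpr le_top)) i
  have hw1 : ∀ i, ContDiff ℝ 1 (pdVec v i) := fun i => (hw i).of_le one_le_two
  have hgrad : ∀ i, Integrable fun x => ∑ j, ∑ k, grad (pdVec v i) x k j ^ 2 := fun i =>
    integrable_comp_grad (hw1 i) (hsupp.pdVec i) (F := fun M => ∑ j, ∑ k, M k j ^ 2)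
      (by fun_prop) (by simp)
  have heps : ∀ i, Integrable fun x => ∑ j, ∑ k, epsF (pdVec v i) j k x ^ 2 := fun i =>
    integrable_comp_grad (hw1 i) (hsupp.pdVec i) (F := fun M => ∑ j, ∑ k, ((M j k + M k j) / 2) ^ 2)
      (by fun_prop) (by simp)
  have hvanish : ∀ x ∉ Ω, ∀ i j k, grad (pdVec v i) x j k = 0 := fun x hx i =>
    grad_eq_zero_of_notMem_tsupport fun h => hx (hin (tsupport_pdVec_subset i h))
  simp only [pd_grad_eq_grad_pdVec hv2, pd_epsF_eq_epsF_pdVec hv2]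
  rw [setIntegral_eq_integral_of_forall_compl_eq_zero fun x hx => by simp [hvanish x hx],
    setIntegral_eq_integral_of_forall_compl_eq_zero fun x hx => by simp [epsF, hvanish x hx],
    integral_finsetSum _ fun i _ => hgrad i, integral_finsetSum _ fun i _ => heps i, Finset.mul_sum]
  exact Finset.sum_le_sum fun i _ => korn_first_inequality (hw i) (hsupp.pdVec i)

/-- Second-order Korn inequality: for `v ∈ [H₀²(Ω)]²` on a bounded domain `Ω ⊆ ℝ²`
(stated for smooth vector fields compactly supported in `Ω`, which are dense in `H₀²`),
`2‖∇ε(v)‖²_{L²(Ω)} ≥ ‖∇²v‖²_{L²(Ω)}`, where `(∇ε(v))_{ijk} = ∂_i ε_{jk}(v)` and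
`(∇²v)_{ijk} = ∂_i ∂_j v_k`. -/
theorem stmt3 (Ω : Set V2) (hΩo : IsOpen Ω) (hΩb : Bornology.IsBounded Ω)
    (v : V2 → V2) (hv : ContDiff ℝ (⊤ : ℕ∞) v)
    (hsupp : HasCompactSupport v) (hin : tsupport v ⊆ Ω) :
    (∫ x in Ω, ∑ i, ∑ j, ∑ k, (pd (fun y => grad v y k j) i x) ^ 2) ≤
      2 * ∫ x in Ω, ∑ i, ∑ j, ∑ k, (pd (epsF v j k) i x) ^ 2 :=
  stmt3_general Ω v hv hsupp hin
end
end

section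
/- Let T be a triangle and p ∈ [P₂(T)]² (written in barycentric monomials p = (Σ_{|α|=2} a_α λ^α, Σ_{|α|=2} b_α λ^α)ᵀ). If p·n_j = 0 on each edge e_j and ∫_{e_j} p·t_j dτ = 0 for each edge e_j, then p ≡ 0. -/
open MeasureTheory

noncomputable section

/-- Euclidean dot product on `ℝ²`. -/
def dot (u v : V2) : ℝ := ∑ j, u j * v j

/-- `f : ℝ² → ℝ` is a polynomial of total degree at most `k`. -/
def PolyDeg (k : ℕ) (f : V2 → ℝ) : Prop :=
  ∃ p : MvPolynomial (Fin 2) ℝ, p.totalDegree ≤ k ∧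
    ∀ x, f x = MvPolynomial.eval (fun i => x i) p

/-- a vector field all of whose components are polynomials of degree at most `k`,
i.e. an element of `[P_k]²`. -/
def PolyVecDeg (k : ℕ) (w : V2 → V2) : Prop := ∀ j, PolyDeg k (fun x => w x j)

/-- the divergence of a vector field on `ℝ²` -/
def divP (w : V2 → V2) (x : V2) : ℝ :=
  ∑ j, fderiv ℝ (fun y => w y j) x (EuclideanSpace.single j 1)

/-- A nondegenerate triangle `T ⊆ ℝ²` with vertices `A 0, A 1, A 2`, barycentric
coordinate functions `lam i` and unit outward normals `nv i` to the edge `e_i`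
opposite the vertex `A i` (the edge from `A (i+1)` to `A (i+2)`). -/
structure TriangleData where
  A : Fin 3 → V2
  lam : Fin 3 → V2 → ℝ
  nv : Fin 3 → V2
  indep : AffineIndependent ℝ A
  lam_poly : ∀ i, PolyDeg 1 (lam i)
  lam_vertex : ∀ i j, lam i (A j) = if i = j then (1 : ℝ) else 0
  lam_sum : ∀ x, ∑ i, lam i x = 1
  nv_unit : ∀ i, ‖nv i‖ = 1
  nv_orth : ∀ i, dot (nv i) (A (i + 2) - A (i + 1)) = 0
  nv_outward : ∀ i, dot (nv i) (A i - A (i + 1)) < 0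

namespace TriangleData

variable (T : TriangleData)

/-- the cubic bubble `b = λ₁λ₂λ₃` -/
def bub (x : V2) : ℝ := ∏ i, T.lam i x

/-- affine parametrization of the edge `e_i` (from `A (i+1)` at `t = 0` to
`A (i+2)` at `t = 1`) -/
def Ept (i : Fin 3) (t : ℝ) : V2 := T.A (i + 1) + t • (T.A (i + 2) - T.A (i + 1))

/-- the unit tangent of the edge `e_i` -/
def tv (i : Fin 3) : V2 := ‖T.A (i + 2) - T.A (i + 1)‖⁻¹ • (T.A (i + 2) - T.A (i + 1))

/-- the midpoint of the edge `e_i` -/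
def mid (i : Fin 3) : V2 := midpoint ℝ (T.A (i + 1)) (T.A (i + 2))

/-- the normal derivative `∂_n f` along edge `e_i`, at edge parameter `t` -/
def nder (f : V2 → ℝ) (i : Fin 3) (t : ℝ) : ℝ := fderiv ℝ f (T.Ept i t) (T.nv i)

/-- membership in `P₂*(T) = {v ∈ [P₂(T)]² : (v·n)|_e ∈ P₁(e) for every edge e}` -/
def memP2star (p : V2 → V2) : Prop :=
  PolyVecDeg 2 p ∧ ∀ i, ∃ a c : ℝ, ∀ t : ℝ, dot (p (T.Ept i t)) (T.nv i) = a * t + c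

/-- membership in `W(T) = [P₂(T)]² ⊕ b·P₂*(T)` (the first element) -/
def memW1 (w : V2 → V2) : Prop :=
  ∃ q p, PolyVecDeg 2 q ∧ T.memP2star p ∧ ∀ x, w x = q x + T.bub x • p x

/-- membership in
`P₃*(T) = {w ∈ [P₃(T)]² : ∇·w ∈ P₀(T), (w·n)|_e ∈ P₁(e) for every edge e}` -/
def memP3star (p : V2 → V2) : Prop :=
  PolyVecDeg 3 p ∧ (∃ c : ℝ, ∀ x, divP p x = c) ∧
    ∀ i, ∃ a c : ℝ, ∀ t : ℝ, dot (p (T.Ept i t)) (T.nv i) = a * t + c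

/-- membership in `W(T) = [P₂(T)]² ⊕ b·P₃*(T)` (the second element) -/
def memW2 (w : V2 → V2) : Prop :=
  ∃ q p, PolyVecDeg 2 q ∧ T.memP3star p ∧ ∀ x, w x = q x + T.bub x • p x

/-- vanishing of the 21 degrees of freedom: the values of `w` at the three vertices and
three edge midpoints, the moments `∫_e ∂_n(w·t) dτ`, and the moments
`∫_e ∂_n(w·n) τ^k dτ`, `k = 0,1`, over each edge. -/
def dofsVanish (w : V2 → V2) : Prop :=
  (∀ i, w (T.A i) = 0) ∧ (∀ i, w (T.mid i) = 0) ∧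
    (∀ i, (∫ t in (0 : ℝ)..1, T.nder (fun x => dot (w x) (T.tv i)) i t) = 0) ∧
    (∀ i, ∀ k : Fin 2,
      (∫ t in (0 : ℝ)..1, T.nder (fun x => dot (w x) (T.nv i)) i t * t ^ (k : ℕ)) = 0)

end TriangleData

/-! The normal condition at the two ends of each edge makes `p` vanish at the
vertices, where two independent normals meet. Along an edge, `p · t` is then a quadratic vanishing
at both endpoints with zero mean, so it vanishes identically, in particular at the midpoint, where
also `p · n = 0`. Hence each component of `p` is a quadratic vanishing at the six nodes of the
`P₂` Lagrange element (vertices and edge midpoints), which are unisolvent. -/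

lemma V2.ext {u v : V2} (h₀ : u 0 = v 0) (h₁ : u 1 = v 1) : u = v := by
  ext j
  fin_cases j
  exacts [h₀, h₁]

lemma dot_eq (u v : V2) : dot u v = u 0 * v 0 + u 1 * v 1 := by
  simp [dot, Fin.sum_univ_two]

lemma sq_add_sq_eq_norm_sq (u : V2) : u 0 ^ 2 + u 1 ^ 2 = ‖u‖ ^ 2 := by
  simp [EuclideanSpace.norm_sq_eq, Fin.sum_univ_two]

def cross (u v : V2) : ℝ := u 0 * v 1 - u 1 * v 0

lemma cross_eq_zero_of_dot_eq_zero {n w u : V2} (hn : ‖n‖ = 1) (hw : dot w n = 0)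
    (hu : dot n u = 0) : cross w u = 0 := by
  have h := sq_add_sq_eq_norm_sq n
  rw [hn, one_pow] at h
  rw [dot_eq] at hw hu
  unfold cross
  linear_combination (u 0 * w 1 - u 1 * w 0) * h + (n 0 * u 1 - n 1 * u 0) * hw
    + (n 1 * w 0 - n 0 * w 1) * hu

lemma eq_zero_of_cross_eq_zero {w u v : V2} (hu : cross w u = 0) (hv : cross w v = 0)
    (huv : cross u v ≠ 0) : w = 0 := by
  unfold cross at *
  refine V2.ext ?_ ?_ <;> simp only [PiLp.zero_apply] <;>
    refine (mul_eq_zero.1 ?_).resolve_right huv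
  · linear_combination u 0 * hv - v 0 * hu
  · linear_combination u 1 * hv - v 1 * hu

lemma eq_zero_of_dot_eq_zero_of_cross_eq_zero {w e : V2} (he : e ≠ 0) (hd : dot w e = 0)
    (hc : cross w e = 0) : w = 0 := by
  have h : e 0 ^ 2 + e 1 ^ 2 ≠ 0 := by
    rw [sq_add_sq_eq_norm_sq]; positivity
  rw [dot_eq] at hd
  unfold cross at hc
  refine V2.ext ?_ ?_ <;> simp only [PiLp.zero_apply] <;>
    refine (mul_eq_zero.1 ?_).resolve_right h
  · linear_combination e 0 * hd + e 1 * hc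
  · linear_combination e 1 * hd - e 0 * hc

lemma exists_eq_add_smul_add_smul {u v : V2} (huv : cross u v ≠ 0) (a x : V2) :
    ∃ s t : ℝ, x = a + s • u + t • v := by
  refine ⟨cross (x - a) v / cross u v, cross u (x - a) / cross u v, ?_⟩
  unfold cross at *
  refine V2.ext ?_ ?_ <;>
    simp only [PiLp.add_apply, PiLp.smul_apply, PiLp.sub_apply, smul_eq_mul, div_eq_mul_inv]
  · linear_combination (a 0 - x 0) * mul_inv_cancel₀ huv
  · linear_combination (a 1 - x 1) * mul_inv_cancel₀ huv

lemma cross_ne_zero_of_linearIndependent {u v : V2} (h : LinearIndependent ℝ ![u, v]) :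
    cross u v ≠ 0 := by
  have h' := h.map' (WithLp.linearEquiv 2 ℝ (Fin 2 → ℝ)).toLinearMap (LinearEquiv.ker _)
  have hrow : LinearIndependent ℝ (Matrix.of ![(u : Fin 2 → ℝ), v]).row := by
    have e : (Matrix.of ![(u : Fin 2 → ℝ), v]).row =
        (WithLp.linearEquiv 2 ℝ (Fin 2 → ℝ)) ∘ ![u, v] := by
      ext i j; fin_cases i <;> rfl
    rw [e]; exact h'
  rw [Matrix.linearIndependent_rows_iff_isUnit, Matrix.isUnit_iff_isUnit_det, Matrix.det_fin_two,
    isUnit_iff_ne_zero] at hrow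
  simpa [cross] using hrow

def IsQuadratic (g : ℝ → ℝ → ℝ) : Prop :=
  ∃ c₀ c₁ c₂ c₃ c₄ c₅ : ℝ, ∀ s t,
    g s t = c₀ + c₁ * s + c₂ * t + c₃ * s ^ 2 + c₄ * (s * t) + c₅ * t ^ 2

namespace IsQuadratic

lemma congr {g h : ℝ → ℝ → ℝ} (hg : IsQuadratic g) (hgh : ∀ s t, g s t = h s t) :
    IsQuadratic h := by
  obtain ⟨c₀, c₁, c₂, c₃, c₄, c₅, hg⟩ := hg
  exact ⟨c₀, c₁, c₂, c₃, c₄, c₅, fun s t => (hgh s t).symm.trans (hg s t)⟩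

lemma zero : IsQuadratic fun _ _ => 0 :=
  ⟨0, 0, 0, 0, 0, 0, fun s t => by ring⟩

lemma add {g h : ℝ → ℝ → ℝ} (hg : IsQuadratic g) (hh : IsQuadratic h) :
    IsQuadratic fun s t => g s t + h s t := by
  obtain ⟨c₀, c₁, c₂, c₃, c₄, c₅, hg⟩ := hg
  obtain ⟨d₀, d₁, d₂, d₃, d₄, d₅, hh⟩ := hh
  exact ⟨c₀ + d₀, c₁ + d₁, c₂ + d₂, c₃ + d₃, c₄ + d₄, c₅ + d₅, fun s t => by
    simp only [hg, hh]; ring⟩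

lemma const_mul {g : ℝ → ℝ → ℝ} (hg : IsQuadratic g) (c : ℝ) :
    IsQuadratic fun s t => c * g s t := by
  obtain ⟨c₀, c₁, c₂, c₃, c₄, c₅, hg⟩ := hg
  exact ⟨c * c₀, c * c₁, c * c₂, c * c₃, c * c₄, c * c₅, fun s t => by simp only [hg]; ring⟩

lemma sum {ι : Type*} (S : Finset ι) {g : ι → ℝ → ℝ → ℝ} (hg : ∀ i ∈ S, IsQuadratic (g i)) :
    IsQuadratic fun s t => ∑ i ∈ S, g i s t := by
  classical
  induction S using Finset.induction_on with
  | empty => simpa using zero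
  | insert i S hi ih =>
    simp only [Finset.sum_insert hi]
    exact (hg i (S.mem_insert_self i)).add (ih fun j hj => hg j (Finset.mem_insert_of_mem hj))

end IsQuadratic

lemma isQuadratic_affine_mul_affine (a b d a' b' d' : ℝ) :
    IsQuadratic fun s t => (a + s * b + t * d) * (a' + s * b' + t * d') :=
  ⟨a * a', a * b' + b * a', a * d' + d * a', b * b', b * d' + d * b', d * d', fun s t => by ring⟩

lemma isQuadratic_monomial_affine {k l : ℕ} (hkl : k + l ≤ 2) (c a₀ b₀ d₀ a₁ b₁ d₁ : ℝ) :
    IsQuadratic fun s t => c * ((a₀ + s * b₀ + t * d₀) ^ k * (a₁ + s * b₁ + t * d₁) ^ l) := by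
  have h := isQuadratic_affine_mul_affine
  have hk : k ≤ 2 := by omega
  have hl : l ≤ 2 := by omega
  interval_cases k <;> interval_cases l <;> try omega
  · exact (h c 0 0 1 0 0).congr fun s t => by ring
  · exact (h (c * a₁) (c * b₁) (c * d₁) 1 0 0).congr fun s t => by ring
  · exact (h (c * a₁) (c * b₁) (c * d₁) a₁ b₁ d₁).congr fun s t => by ring
  · exact (h (c * a₀) (c * b₀) (c * d₀) 1 0 0).congr fun s t => by ring
  · exact (h (c * a₀) (c * b₀) (c * d₀) a₁ b₁ d₁).congr fun s t => by ring
  · exact (h (c * a₀) (c * b₀) (c * d₀) a₀ b₀ d₀).congr fun s t => by ring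

lemma PolyDeg.isQuadratic_comp {f : V2 → ℝ} (hf : PolyDeg 2 f) (a u v : V2) :
    IsQuadratic fun s t => f (a + s • u + t • v) := by
  obtain ⟨P, hdeg, hP⟩ := hf
  have hf : ∀ s t, f (a + s • u + t • v) = ∑ m ∈ P.support,
      P.coeff m * ((a 0 + s * u 0 + t * v 0) ^ m 0 * (a 1 + s * u 1 + t * v 1) ^ m 1) := by
    intro s t
    simp [hP, MvPolynomial.eval_eq', Fin.prod_univ_two]
  refine (IsQuadratic.sum P.support fun m hm => ?_).congr fun s t => (hf s t).symm
  have hm2 : m 0 + m 1 ≤ 2 := by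
    have := (MvPolynomial.le_totalDegree hm).trans hdeg
    rwa [Finsupp.sum_fintype _ _ (fun _ => rfl), Fin.sum_univ_two] at this
  exact isQuadratic_monomial_affine hm2 (P.coeff m) (a 0) (u 0) (v 0) (a 1) (u 1) (v 1)

lemma IsQuadratic.eq_zero_of_eq_zero_at_nodes {g : ℝ → ℝ → ℝ} (hg : IsQuadratic g)
    (h₀ : g 0 0 = 0) (h₁ : g 1 0 = 0) (h₂ : g 0 1 = 0) (h₃ : g (1 / 2) 0 = 0)
    (h₄ : g 0 (1 / 2) = 0) (h₅ : g (1 / 2) (1 / 2) = 0) (s t : ℝ) : g s t = 0 := by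
  obtain ⟨c₀, c₁, c₂, c₃, c₄, c₅, hg⟩ := hg
  simp only [hg] at h₀ h₁ h₂ h₃ h₄ h₅ ⊢
  have : c₀ = 0 := by linarith
  have : c₁ = 0 := by linarith
  have : c₂ = 0 := by linarith
  have : c₃ = 0 := by linarith
  have : c₅ = 0 := by linarith
  have : c₄ = 0 := by linarith
  simp [*]

lemma eq_zero_of_quadratic_of_integral_eq_zero {q : ℝ → ℝ} {A B C : ℝ}
    (hq : ∀ t, q t = A + B * t + C * t ^ 2) (h₀ : q 0 = 0) (h₁ : q 1 = 0)
    (hint : ∫ t in (0 : ℝ)..1, q t = 0) (t : ℝ) : q t = 0 := by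
  have hint' : A + B / 2 + C / 3 = 0 := by
    simp only [hq] at hint
    rw [intervalIntegral.integral_add (Continuous.intervalIntegrable (by fun_prop) _ _)
        (Continuous.intervalIntegrable (by fun_prop) _ _),
      intervalIntegral.integral_add intervalIntegrable_const
        (Continuous.intervalIntegrable (by fun_prop) _ _),
      intervalIntegral.integral_const, intervalIntegral.integral_const_mul,
      intervalIntegral.integral_const_mul, integral_id, integral_pow] at hint
    norm_num at hint
    linarith
  rw [hq] at h₀ h₁ ⊢
  norm_num at h₀ h₁
  have : B = 0 := by linarith
  have : C = 0 := by linarith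
  simp [*]

lemma PolyVecDeg.isQuadratic_dot {p : V2 → V2} (hp : PolyVecDeg 2 p) (a u v w : V2) :
    IsQuadratic fun s t => dot (p (a + s • u + t • v)) w :=
  (((hp 0).isQuadratic_comp a u v).const_mul (w 0)).add
    (((hp 1).isQuadratic_comp a u v).const_mul (w 1)) |>.congr fun s t => by
      rw [dot_eq]; ring

namespace TriangleData

variable (T : TriangleData)

def edge (i : Fin 3) : V2 := T.A (i + 2) - T.A (i + 1)

lemma Ept_eq (i : Fin 3) (t : ℝ) : T.Ept i t = T.A (i + 1) + t • T.edge i := rfl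

lemma Ept_zero (i : Fin 3) : T.Ept i 0 = T.A (i + 1) := by simp [Ept]

lemma Ept_one (i : Fin 3) : T.Ept i 1 = T.A (i + 2) := by simp [Ept]

lemma linearIndependent_sub : LinearIndependent ℝ ![T.A 1 - T.A 0, T.A 2 - T.A 0] := by
  have h := (affineIndependent_iff_linearIndependent_vsub ℝ T.A 0).1 T.indep
  have e : ![T.A 1 - T.A 0, T.A 2 - T.A 0] =
      (fun i : {x : Fin 3 // x ≠ 0} => T.A i -ᵥ T.A 0) ∘ finSuccAboveEquiv 0 := by
    ext i : 1
    fin_cases i <;> rfl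
  rw [e]
  exact h.comp _ (Equiv.injective _)

-- Each such cross product is `± cross (A 1 - A 0) (A 2 - A 0)`, twice the signed area.
lemma cross_edge_ne_zero {i k : Fin 3} (hik : i ≠ k) : cross (T.edge i) (T.edge k) ≠ 0 := by
  have h := cross_ne_zero_of_linearIndependent T.linearIndependent_sub
  unfold cross edge at *
  simp only [PiLp.sub_apply] at h ⊢
  fin_cases i <;> fin_cases k <;> simp at hik ⊢ <;> contrapose! h <;>
    first | linear_combination h | linear_combination -h

lemma edge_ne_zero (i : Fin 3) : T.edge i ≠ 0 := fun h =>
  T.cross_edge_ne_zero (i := i) (k := i + 1) (by fin_cases i <;> decide) (by simp [h, cross])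

lemma eq_zero_of_dot_nv_eq_zero {w : V2} {i k : Fin 3} (hik : i ≠ k)
    (hi : dot w (T.nv i) = 0) (hk : dot w (T.nv k) = 0) : w = 0 :=
  eq_zero_of_cross_eq_zero (cross_eq_zero_of_dot_eq_zero (T.nv_unit i) hi (T.nv_orth i))
    (cross_eq_zero_of_dot_eq_zero (T.nv_unit k) hk (T.nv_orth k)) (T.cross_edge_ne_zero hik)

lemma eq_zero_of_dot_nv_eq_zero_of_dot_tv_eq_zero {w : V2} {i : Fin 3}
    (hn : dot w (T.nv i) = 0) (ht : dot w (T.tv i) = 0) : w = 0 := by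
  refine eq_zero_of_dot_eq_zero_of_cross_eq_zero (T.edge_ne_zero i) ?_
    (cross_eq_zero_of_dot_eq_zero (T.nv_unit i) hn (T.nv_orth i))
  have htv : dot w (T.tv i) = ‖T.edge i‖⁻¹ * dot w (T.edge i) := by
    simp only [tv, dot_eq, PiLp.smul_apply, smul_eq_mul, edge]; ring
  rw [htv] at ht
  exact (mul_eq_zero.1 ht).resolve_left (inv_ne_zero (norm_ne_zero_iff.2 (T.edge_ne_zero i)))

variable {T}

lemma apply_vertex_eq_zero {p : V2 → V2}
    (hn : ∀ i, ∀ t ∈ Set.Icc (0 : ℝ) 1, dot (p (T.Ept i t)) (T.nv i) = 0) (j : Fin 3) :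
    p (T.A j) = 0 := by
  have h₁ : T.Ept (j + 1) 1 = T.A j := by rw [Ept_one]; congr 1; fin_cases j <;> decide
  have h₂ : T.Ept (j + 2) 0 = T.A j := by rw [Ept_zero]; congr 1; fin_cases j <;> decide
  refine T.eq_zero_of_dot_nv_eq_zero (i := j + 1) (k := j + 2) (by fin_cases j <;> decide) ?_ ?_
  · simpa [h₁] using hn (j + 1) 1 (by simp)
  · simpa [h₂] using hn (j + 2) 0 (by simp)

lemma dot_tv_apply_midpoint_eq_zero {p : V2 → V2} (hp : PolyVecDeg 2 p)
    (hvert : ∀ j, p (T.A j) = 0)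
    (ht : ∀ i, (∫ t in (0 : ℝ)..1, dot (p (T.Ept i t)) (T.tv i)) = 0) (i : Fin 3) :
    dot (p (T.Ept i (1 / 2))) (T.tv i) = 0 := by
  obtain ⟨c₀, c₁, _, c₃, _, _, hq⟩ := hp.isQuadratic_dot (T.A (i + 1)) (T.edge i) 0 (T.tv i)
  refine eq_zero_of_quadratic_of_integral_eq_zero (fun t => by simpa [Ept_eq] using hq t 0)
    ?_ ?_ (ht i) _
  · simp [Ept_zero, hvert, dot]
  · simp [Ept_one, hvert, dot]

lemma eq_zero_of_eq_zero_at_nodes {f : V2 → ℝ} (hf : PolyDeg 2 f) (hA : ∀ j, f (T.A j) = 0)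
    (hM : ∀ i, f (T.Ept i (1 / 2)) = 0) (x : V2) : f x = 0 := by
  -- In the chart `A 0 + s • (A 1 - A 0) + t • (A 2 - A 0)` the nodes are those of the
  -- reference triangle.
  obtain ⟨s, t, rfl⟩ := exists_eq_add_smul_add_smul
    (cross_ne_zero_of_linearIndependent T.linearIndependent_sub) (T.A 0) x
  refine (hf.isQuadratic_comp _ _ _).eq_zero_of_eq_zero_at_nodes ?_ ?_ ?_ ?_ ?_ ?_ s t
  · simpa using hA 0
  · simpa using hA 1
  · simpa using hA 2
  · convert hM 2 using 2; simp only [Ept, Fin.reduceAdd]; module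
  · convert hM 1 using 2; simp only [Ept, Fin.reduceAdd]; module
  · convert hM 0 using 2; simp only [Ept, Fin.reduceAdd]; module

end TriangleData

/-- If `p ∈ [P₂(T)]²` satisfies `p·n_j = 0` on each edge `e_j` and
`∫_{e_j} p·t_j dτ = 0` for each edge `e_j`, then `p ≡ 0`. -/
theorem stmt11 (T : TriangleData) (p : V2 → V2) (hp : PolyVecDeg 2 p)
    (hn : ∀ i, ∀ t ∈ Set.Icc (0 : ℝ) 1, dot (p (T.Ept i t)) (T.nv i) = 0)
    (ht : ∀ i, (∫ t in (0 : ℝ)..1, dot (p (T.Ept i t)) (T.tv i)) = 0) :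
    ∀ x, p x = 0 := by
  have hvert : ∀ j, p (T.A j) = 0 := TriangleData.apply_vertex_eq_zero hn
  have hmid : ∀ i, p (T.Ept i (1 / 2)) = 0 := fun i =>
    T.eq_zero_of_dot_nv_eq_zero_of_dot_tv_eq_zero (hn i _ ⟨by norm_num, by norm_num⟩)
      (TriangleData.dot_tv_apply_midpoint_eq_zero hp hvert ht i)
  intro x
  ext j
  simpa using TriangleData.eq_zero_of_eq_zero_at_nodes (T := T) (hp j)
    (fun k => by simp [hvert k]) (fun i => by simp only [hmid i, PiLp.zero_apply]) x
end
end

section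
/- Let φ ∈ P₄(T) on a triangle T with φ = 0 on ∂T, so φ = b·φ₁ with φ₁ ∈ P₁(T) and b = λ₁λ₂λ₃ the cubic bubble. If ∫_e ∂_n φ dτ = 0 for every edge e of T, then φ₁ ≡ 0 and hence φ ≡ 0. -/
open MeasureTheory

noncomputable section

/-!
On the edge `e_i` the factor `λ_i` of the bubble vanishes, so the normal derivative of
`b φ₁ = λ_i (λ_{i+1} λ_{i+2} φ₁)` there is `(∂_n λ_i) λ_{i+1} λ_{i+2} φ₁`. With the edge
parameter `t` this is `(∂_n λ_i) (1 - t) t ((1 - t) u + t v)`, where `u, v` are the values of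
`φ₁` at the endpoints of `e_i`, and its integral over `[0, 1]` is `(∂_n λ_i) (u + v) / 12`.
Since `∂_n λ_i ≠ 0`, the values of `φ₁` at the ends of each edge sum to zero, so `φ₁` vanishes
at the three vertices and hence everywhere.
-/

open MvPolynomial in
theorem MvPolynomial.eq_C_add_sum_of_totalDegree_le_one {σ R : Type*} [Fintype σ]
    [DecidableEq σ] [CommSemiring R] {p : MvPolynomial σ R} (hp : p.totalDegree ≤ 1) :
    p = C (coeff 0 p) + ∑ i, monomial (Finsupp.single i 1) (coeff (Finsupp.single i 1) p) := by
  ext d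
  simp only [coeff_add, coeff_C, coeff_sum, coeff_monomial]
  rcases Nat.lt_or_ge 1 d.degree with hd | hd
  · rw [coeff_eq_zero_of_totalDegree_lt (hp.trans_lt hd), if_neg, Finset.sum_eq_zero, add_zero]
    · rintro i -
      rw [if_neg]
      rintro rfl
      simp at hd
    · rintro rfl
      simp at hd
  · rcases Nat.le_one_iff_eq_zero_or_eq_one.mp hd with hd | hd
    · obtain rfl := (Finsupp.degree_eq_zero_iff d).mp hd
      simp
    · obtain ⟨a, rfl⟩ := Finsupp.range_single_one.symm.subset hd
      simp [Finsupp.single_left_inj, eq_comm (a := (0 : σ →₀ ℕ))]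

theorem PolyDeg.exists_continuousAffineMap {f : V2 → ℝ} (hf : PolyDeg 1 f) :
    ∃ g : V2 →ᴬ[ℝ] ℝ, ⇑g = f := by
  obtain ⟨p, hp, hfp⟩ := hf
  refine ⟨(∑ i, p.coeff (Finsupp.single i 1) • EuclideanSpace.proj i).toContinuousAffineMap
    + ContinuousAffineMap.const ℝ V2 (p.coeff 0), funext fun x => ?_⟩
  rw [hfp]
  conv_rhs => rw [MvPolynomial.eq_C_add_sum_of_totalDegree_le_one hp]
  simp [MvPolynomial.eval_monomial, Finsupp.prod_single_index, add_comm]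

theorem span_pair_eq_top_of_inner_eq_zero {E : Type*} [NormedAddCommGroup E]
    [InnerProductSpace ℝ E] [FiniteDimensional ℝ E] (hE : Module.finrank ℝ E = 2) {u v : E}
    (hu : u ≠ 0) (hv : v ≠ 0) (huv : inner ℝ u v = 0) : Submodule.span ℝ {u, v} = ⊤ := by
  have hli : LinearIndependent ℝ ![u, v] := by
    refine linearIndependent_of_ne_zero_of_inner_eq_zero (𝕜 := ℝ) ?_ ?_
    · intro i; fin_cases i <;> simpa
    · intro i j hij
      fin_cases i <;> fin_cases j <;> simp_all [real_inner_comm]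
  simpa [Matrix.range_cons, Set.pair_comm] using
    hli.span_eq_top_of_card_eq_finrank' (by simp [hE])

theorem AffineMap.eq_zero_of_affineIndependent {k V P W ι : Type*} [Field k] [AddCommGroup V]
    [Module k V] [AddTorsor V P] [AddCommGroup W] [Module k W] [FiniteDimensional k V]
    [Fintype ι] {p : ι → P} (hp : AffineIndependent k p)
    (hcard : Fintype.card ι = Module.finrank k V + 1) {f : P →ᵃ[k] W} (hf : ∀ i, f (p i) = 0) :
    f = 0 :=
  AffineMap.ext_on (hp.affineSpan_eq_top_iff_card_eq_finrank_add_one.mpr hcard)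
    (by rintro - ⟨i, rfl⟩; simp [hf])

theorem fin_three_eq_zero_of_pairwise_add_eq_zero {K : Type*} [Field K] [CharZero K]
    {u : Fin 3 → K} (h : ∀ i, u (i + 1) + u (i + 2) = 0) : ∀ j, u j = 0 := by
  have h0 := h 0
  have h1 := h 1
  have h2 := h 2
  simp only [Fin.isValue, Fin.reduceAdd] at h0 h1 h2
  intro j
  match j with
  | 0 => linear_combination (h1 + h2 - h0) / 2
  | 1 => linear_combination (h0 + h2 - h1) / 2
  | 2 => linear_combination (h0 + h1 - h2) / 2

theorem integral_one_sub_mul_mul_lineMap (u v : ℝ) :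
    ∫ t in (0 : ℝ)..1, (1 - t) * t * ((1 - t) * u + t * v) = (u + v) / 12 := by
  have hpoly : ∀ t : ℝ, (1 - t) * t * ((1 - t) * u + t * v)
      = u * t ^ 1 - (2 * u - v) * t ^ 2 + (u - v) * t ^ 3 := fun t => by ring
  simp_rw [hpoly]
  rw [intervalIntegral.integral_add, intervalIntegral.integral_sub]
  · simp only [intervalIntegral.integral_const_mul, integral_pow]
    norm_num
    ring
  all_goals exact Continuous.intervalIntegrable (by fun_prop) _ _

theorem fderiv_mul_of_eq_zero {𝕜 E : Type*} [NontriviallyNormedField 𝕜] [NormedAddCommGroup E]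
    [NormedSpace 𝕜 E] {f g : E → 𝕜} {x : E} (hf : DifferentiableAt 𝕜 f x)
    (hg : DifferentiableAt 𝕜 g x) (hfx : f x = 0) :
    fderiv 𝕜 (fun y => f y * g y) x = g x • fderiv 𝕜 f x := by
  rw [fderiv_fun_mul hf hg, hfx]
  ext v
  simp

theorem dot_eq_inner (u v : V2) : dot u v = inner ℝ u v := by
  simp [dot, PiLp.inner_apply, mul_comm]

namespace TriangleData

variable (T : TriangleData)

def lamAffine (i : Fin 3) : V2 →ᴬ[ℝ] ℝ := (T.lam_poly i).exists_continuousAffineMap.choose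

@[simp]
theorem coe_lamAffine (i : Fin 3) : ⇑(T.lamAffine i) = T.lam i :=
  (T.lam_poly i).exists_continuousAffineMap.choose_spec

@[fun_prop]
theorem differentiable_lam (i : Fin 3) : Differentiable ℝ (T.lam i) := by
  rw [← coe_lamAffine]
  exact (T.lamAffine i).differentiable

theorem fderiv_lam (i : Fin 3) (x : V2) : fderiv ℝ (T.lam i) x = (T.lamAffine i).contLinear := by
  rw [← coe_lamAffine]
  exact (T.lamAffine i).fderiv

theorem apply_Ept (g : V2 →ᴬ[ℝ] ℝ) (i : Fin 3) (t : ℝ) :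
    g (T.Ept i t) = (1 - t) * g (T.A (i + 1)) + t * g (T.A (i + 2)) := by
  have : T.Ept i t = AffineMap.lineMap (T.A (i + 1)) (T.A (i + 2)) t := by
    rw [AffineMap.lineMap_apply_module', Ept, add_comm]
  rw [this, ← ContinuousAffineMap.coe_toAffineMap, AffineMap.apply_lineMap,
    AffineMap.lineMap_apply_ring]

theorem lam_self_Ept (i : Fin 3) (t : ℝ) : T.lam i (T.Ept i t) = 0 := by
  rw [← coe_lamAffine, apply_Ept, coe_lamAffine, T.lam_vertex, T.lam_vertex]
  fin_cases i <;> simp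

theorem lam_succ_Ept (i : Fin 3) (t : ℝ) : T.lam (i + 1) (T.Ept i t) = 1 - t := by
  rw [← coe_lamAffine, apply_Ept, coe_lamAffine, T.lam_vertex, T.lam_vertex]
  fin_cases i <;> simp

theorem lam_add_two_Ept (i : Fin 3) (t : ℝ) : T.lam (i + 2) (T.Ept i t) = t := by
  rw [← coe_lamAffine, apply_Ept, coe_lamAffine, T.lam_vertex, T.lam_vertex]
  fin_cases i <;> simp

theorem bub_eq_lam_mul (i : Fin 3) (x : V2) :
    T.bub x = T.lam i x * (T.lam (i + 1) x * T.lam (i + 2) x) := by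
  rw [bub, Fin.prod_univ_three]
  fin_cases i <;> simp <;> ring

theorem nder_bub_mul (g : V2 →ᴬ[ℝ] ℝ) (i : Fin 3) (t : ℝ) :
    T.nder (fun x => T.bub x * g x) i t = (T.lamAffine i).contLinear (T.nv i) *
      ((1 - t) * t * ((1 - t) * g (T.A (i + 1)) + t * g (T.A (i + 2)))) := by
  have hfun : (fun x => T.bub x * g x)
      = fun x => T.lam i x * (T.lam (i + 1) x * T.lam (i + 2) x * g x) := by
    funext x
    rw [T.bub_eq_lam_mul i]
    ring
  rw [nder, hfun, fderiv_mul_of_eq_zero (T.differentiable_lam i _) (by fun_prop)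
    (T.lam_self_Ept i t), fderiv_lam, lam_succ_Ept, lam_add_two_Ept, apply_Ept]
  simp only [FunLike.coe_smul, Pi.smul_apply, smul_eq_mul]
  ring

theorem lamAffine_contLinear_nv_ne_zero (i : Fin 3) :
    (T.lamAffine i).contLinear (T.nv i) ≠ 0 := by
  set ℓ := (T.lamAffine i).contLinear
  have hvert : ∀ j, ℓ (T.A j - T.A (i + 1)) = if i = j then 1 else 0 := fun j => by
    rw [← vsub_eq_sub, ContinuousAffineMap.contLinear_map_vsub, coe_lamAffine, T.lam_vertex,
      T.lam_vertex, vsub_eq_sub]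
    fin_cases i <;> fin_cases j <;> simp
  have hedge : T.A (i + 2) - T.A (i + 1) ≠ 0 :=
    sub_ne_zero.mpr (T.indep.injective.ne (by fin_cases i <;> decide))
  have hnv : T.nv i ≠ 0 := norm_ne_zero_iff.mp (by simp [T.nv_unit])
  have hspan := span_pair_eq_top_of_inner_eq_zero finrank_euclideanSpace_fin hnv hedge
    (by rw [← dot_eq_inner]; exact T.nv_orth i)
  -- `ℓ` kills the edge direction; killing the normal too would make it vanish on all of `ℝ²`.
  intro hn
  have hℓ : (ℓ : V2 →ₗ[ℝ] ℝ) = 0 := by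
    refine LinearMap.ext_on hspan ?_
    rintro v (rfl | rfl)
    · simpa using hn
    · simpa [show i ≠ i + 2 by fin_cases i <;> decide] using hvert (i + 2)
  simpa [hvert i] using LinearMap.congr_fun hℓ (T.A i - T.A (i + 1))

theorem integral_nder_bub_mul (g : V2 →ᴬ[ℝ] ℝ) (i : Fin 3) :
    ∫ t in (0 : ℝ)..1, T.nder (fun x => T.bub x * g x) i t
      = (T.lamAffine i).contLinear (T.nv i) * ((g (T.A (i + 1)) + g (T.A (i + 2))) / 12) := by
  simp_rw [T.nder_bub_mul, intervalIntegral.integral_const_mul, integral_one_sub_mul_mul_lineMap]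

end TriangleData

/-- Let `φ ∈ P₄(T)` vanish on `∂T`, so `φ = b·φ₁` with `φ₁ ∈ P₁(T)` and `b` the cubic
bubble.  If `∫_e ∂_n φ dτ = 0` for every edge `e` of `T`, then `φ₁ ≡ 0` and hence
`φ ≡ 0`. -/
theorem stmt14 (T : TriangleData) (phi1 : V2 → ℝ) (h1 : PolyDeg 1 phi1)
    (hmom : ∀ i, (∫ t in (0 : ℝ)..1, T.nder (fun x => T.bub x * phi1 x) i t) = 0) :
    (∀ x, phi1 x = 0) ∧ ∀ x, T.bub x * phi1 x = 0 := by
  obtain ⟨g, rfl⟩ := h1.exists_continuousAffineMap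
  have hedge : ∀ i, g (T.A (i + 1)) + g (T.A (i + 2)) = 0 := fun i => by
    have h := hmom i
    rw [T.integral_nder_bub_mul] at h
    linarith [(mul_eq_zero.mp h).resolve_left (T.lamAffine_contLinear_nv_ne_zero i)]
  have hvert : ∀ j, g (T.A j) = 0 := fin_three_eq_zero_of_pairwise_add_eq_zero hedge
  have hg : (g : V2 →ᵃ[ℝ] ℝ) = 0 :=
    AffineMap.eq_zero_of_affineIndependent T.indep (by simp) hvert
  have hzero : ∀ x, g x = 0 := AffineMap.congr_fun hg
  exact ⟨hzero, fun x => by rw [hzero x, mul_zero]⟩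
end
end
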